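/- arXiv:2509.20304 — 2 statements merged into one kernel-verified Lean document; each statement's English description precedes it below -/
import Mathlib

section
/- Under the stationarity conditions $\nabla L = 0$ with $t_0 = 0$, the variables $T_i = \delta^{t_i}$ satisfy $T_i = T_1^i/(1+T_1)^{i-1}$ for all $1 \le i \le n-1$. -/
/-!
Write `H_i = ∑_{j ≤ i} 1 / T_j` and `q = (1 + T₁) / T₁`. Subtracting consecutive stationarity
conditions gives `H_{i-1} T_i² = T_{i+1} + H_i T_{i+1}²`. Since `x ↦ a x² + x` is injective on
`x ≥ 0` for `a ≥ 0`, this determines `T_{i+1}` from `T_i`, `H_{i-1}` and `H_i = H_{i-1} + 1 / T_i`.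
The geometric profile `T_i = T₁ rⁱ⁻¹`, `r = T₁ / (1 + T₁)`, with `H_i = qⁱ` solves this recursion,
so by induction it is the only solution.
-/

open Finset

theorem eq_of_mul_sq_add_self_eq {a x y : ℝ} (ha : 0 ≤ a) (hx : 0 ≤ x) (hy : 0 ≤ y)
    (h : a * x ^ 2 + x = a * y ^ 2 + y) : x = y := by
  have hfac : (x - y) * (a * (x + y) + 1) = 0 := by linear_combination h
  have hpos : 0 < a * (x + y) + 1 := by positivity
  exact sub_eq_zero.mp ((mul_eq_zero.mp hfac).resolve_right hpos.ne')

/-- The claimed value of `T_{k+1}` when `T₁ = t`; shifting the index avoids `i - 1` in `ℕ`. -/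
noncomputable def geomProfile (t : ℝ) (k : ℕ) : ℝ := t ^ (k + 1) / (1 + t) ^ k

section geomProfile

variable {t : ℝ}

theorem geomProfile_pos (ht : 0 < t) (k : ℕ) : 0 < geomProfile t k := by
  unfold geomProfile; positivity

theorem pow_add_inv_geomProfile (ht : t ≠ 0) (k : ℕ) :
    ((1 + t) / t) ^ k + 1 / geomProfile t k = ((1 + t) / t) ^ (k + 1) := by
  unfold geomProfile
  simp only [div_pow]
  field_simp
  ring

theorem geomProfile_stationary (ht : t ≠ 0) (ht' : 1 + t ≠ 0) (k : ℕ) :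
    ((1 + t) / t) ^ k * geomProfile t k ^ 2
      = geomProfile t (k + 1) + ((1 + t) / t) ^ (k + 1) * geomProfile t (k + 1) ^ 2 := by
  unfold geomProfile
  simp only [div_pow]
  field_simp
  ring

end geomProfile

theorem sum_inv_mul_sq_eq_add_of_stationary {n : ℕ} {T : ℕ → ℝ}
    (hstat : ∀ i, 1 ≤ i → i ≤ n - 1 →
      (∑ j ∈ range i, 1 / T j) * T i ^ 2 = ∑ j ∈ Icc (i + 1) n, T j)
    {k : ℕ} (hk : k + 2 ≤ n - 1) :
    (∑ j ∈ range (k + 1), 1 / T j) * T (k + 1) ^ 2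
      = T (k + 2) + (∑ j ∈ range (k + 2), 1 / T j) * T (k + 2) ^ 2 := by
  rw [hstat (k + 1) (by omega) (by omega), hstat (k + 2) (by omega) (by omega),
    Icc_eq_cons_Ioc (by omega), sum_cons, ← Icc_add_one_left_eq_Ioc]

theorem eq_geomProfile_of_recurrence {m : ℕ} {T : ℕ → ℝ} (hpos : ∀ i ≤ m, 0 < T i)
    (h0 : T 0 = 1)
    (hrec : ∀ k, k + 2 ≤ m → (∑ j ∈ range (k + 1), 1 / T j) * T (k + 1) ^ 2
      = T (k + 2) + (∑ j ∈ range (k + 2), 1 / T j) * T (k + 2) ^ 2) :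
    ∀ k, k + 1 ≤ m → T (k + 1) = geomProfile (T 1) k ∧
      ∑ j ∈ range (k + 1), 1 / T j = ((1 + T 1) / T 1) ^ k := by
  intro k hk
  have ht : 0 < T 1 := hpos 1 (by omega)
  have ht' : 1 + T 1 ≠ 0 := by positivity
  induction k with
  | zero => simp [geomProfile, h0]
  | succ k ih =>
    obtain ⟨hTk, hHk⟩ := ih (by omega)
    have hHk1 : ∑ j ∈ range (k + 2), 1 / T j = ((1 + T 1) / T 1) ^ (k + 1) := by
      rw [sum_range_succ, hHk, hTk, pow_add_inv_geomProfile ht.ne']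
    have h := hrec k hk
    rw [hHk, hHk1, hTk, geomProfile_stationary ht.ne' ht'] at h
    exact ⟨eq_of_mul_sq_add_self_eq (a := ((1 + T 1) / T 1) ^ (k + 1)) (by positivity)
      (hpos _ hk).le (geomProfile_pos ht _).le (by linarith), hHk1⟩

theorem stmt_4_general (n : ℕ) (Tv : ℕ → ℝ) (hpos : ∀ i ≤ n, 0 < Tv i)
    (hT0 : Tv 0 = 1)
    (hstat : ∀ i, 1 ≤ i → i ≤ n - 1 →
      (∑ j ∈ Finset.range i, 1 / Tv j) * Tv i ^ 2 = ∑ j ∈ Finset.Icc (i + 1) n, Tv j) :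
    ∀ i, 1 ≤ i → i ≤ n - 1 → Tv i = Tv 1 ^ i / (1 + Tv 1) ^ (i - 1) := by
  intro i hi hin
  obtain ⟨k, rfl⟩ : ∃ k, i = k + 1 := ⟨i - 1, by omega⟩
  have hT := (eq_geomProfile_of_recurrence (fun j hj => hpos j (by omega)) hT0
    (fun k hk => sum_inv_mul_sq_eq_add_of_stationary hstat hk) k hin).1
  simpa [geomProfile] using hT

/-- Under the stationarity conditions `H_{i-1} T_i² = ∑_{j=i+1}^n T_j` (with `T₀ = 1`),
the variables satisfy `T_i = T₁^i/(1+T₁)^(i-1)` for `1 ≤ i ≤ n-1`. -/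
theorem stmt_4 (n : ℕ) (hn : 2 ≤ n) (Tv : ℕ → ℝ) (hpos : ∀ i ≤ n, 0 < Tv i)
    (hT0 : Tv 0 = 1)
    (hstat : ∀ i, 1 ≤ i → i ≤ n - 1 →
      (∑ j ∈ Finset.range i, 1 / Tv j) * Tv i ^ 2 = ∑ j ∈ Finset.Icc (i + 1) n, Tv j) :
    ∀ i, 1 ≤ i → i ≤ n - 1 → Tv i = Tv 1 ^ i / (1 + Tv 1) ^ (i - 1) :=
  stmt_4_general n Tv hpos hT0 hstat
end

section
/- Suppose $t_0 = \dots = t_{a-1} = 0$ and the stationarity conditions hold. Then with $T_a = \delta^{t_a}$, for all $i \ge 0$ with $a + i \le n - a$, $T_{a+i} = \frac{1}{a} \cdot \frac{(a T_a)^{i+1}}{(a T_a + 1)^i}$. -/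
/-!
Write `S_k = ∑_{j<k} 1/T_j`, so that `H_k = S_{k+1}`, and `x = a T_a = S_a T_a`. The product
`S_k T_k = x` is invariant under the recursion: it gives `S_{k+1} T_k = S_k T_k + 1 = x + 1`,
hence the radicand is `1 + 4x(x+1) = (2x+1)²`, and then `T_{k+1} = x / S_{k+1} = x/(x+1) · T_k`.
So the `T_{a+i}` form a geometric sequence of ratio `x/(x+1)`.
-/

open Finset

noncomputable def recipSum (T : ℕ → ℝ) (k : ℕ) : ℝ := ∑ j ∈ range k, 1 / T j

lemma recipSum_succ (T : ℕ → ℝ) (k : ℕ) : recipSum T (k + 1) = recipSum T k + 1 / T k :=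
  sum_range_succ _ _

lemma recipSum_of_eq_one {T : ℕ → ℝ} {a : ℕ} (h : ∀ j < a, T j = 1) : recipSum T a = a := by
  rw [recipSum, sum_congr rfl (g := fun _ => 1) fun j hj => by rw [h j (mem_range.mp hj), div_one]]
  simp

lemma stationary_step_eq {S T x : ℝ} (hT : T ≠ 0) (hx : 0 ≤ x) (hST : S * T = x) :
    (-1 + √(1 + 4 * S * (S + 1 / T) * T ^ 2)) / (2 * (S + 1 / T)) = x / (x + 1) * T := by
  have hS' : S + 1 / T = (x + 1) / T := by field_simp; rw [hST]
  have hrad : 1 + 4 * S * (S + 1 / T) * T ^ 2 = (2 * x + 1) ^ 2 := by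
    rw [hS', ← hST]; field_simp; ring
  rw [hrad, Real.sqrt_sq (by linarith), hS']
  field_simp
  ring

lemma stationary_geometric {T : ℕ → ℝ} {a m : ℕ} {x : ℝ} (hx : 0 < x)
    (hbase : recipSum T a * T a = x)
    (hrec : ∀ k, a ≤ k → k + 1 ≤ m → T (k + 1) =
      (-1 + √(1 + 4 * recipSum T k * recipSum T (k + 1) * T k ^ 2)) / (2 * recipSum T (k + 1))) :
    ∀ i, a + i ≤ m → recipSum T (a + i) * T (a + i) = x ∧ T (a + i) = (x / (x + 1)) ^ i * T a := by
  intro i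
  induction i with
  | zero => exact fun _ => by simpa using hbase
  | succ i ih =>
    intro hi
    obtain ⟨hinv, hgeom⟩ := ih (by omega)
    have hT : T (a + i) ≠ 0 := by rintro h; rw [h, mul_zero] at hinv; exact hx.ne hinv
    have hnext : T (a + (i + 1)) = x / (x + 1) * T (a + i) := by
      rw [← add_assoc, hrec _ (by omega) (by omega), recipSum_succ]
      exact stationary_step_eq hT hx.le hinv
    refine ⟨?_, by rw [hnext, hgeom, pow_succ]; ring⟩
    rw [← add_assoc, recipSum_succ, add_assoc, hnext]
    field_simp
    linear_combination hinv

theorem stmt_15_general (n a : ℕ) (ha : 1 ≤ a)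
    (Tv : ℕ → ℝ) (hpos : ∀ i ≤ n, 0 < Tv i)
    (hzero : ∀ j < a, Tv j = 1)
    (hrec : ∀ i, a < i → i ≤ n - a →
      Tv i = (-1 + Real.sqrt (1 + 4 * (∑ j ∈ Finset.range (i - 1), 1 / Tv j) *
        (∑ j ∈ Finset.range i, 1 / Tv j) * Tv (i - 1) ^ 2)) /
        (2 * ∑ j ∈ Finset.range i, 1 / Tv j)) :
    ∀ i, a + i ≤ n - a →
      Tv (a + i) = (1 / (a : ℝ)) * (((a : ℝ) * Tv a) ^ (i + 1) /
        ((a : ℝ) * Tv a + 1) ^ i) := by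
  intro i hi
  have hTa : 0 < Tv a := hpos a (by omega)
  have haR : (0 : ℝ) < a := by exact_mod_cast ha
  have hgeom := (stationary_geometric (x := a * Tv a) (by positivity)
    (by rw [recipSum_of_eq_one hzero]) (fun k hk hkm => by
      simpa [recipSum] using hrec (k + 1) (by omega) hkm) i hi).2
  have hx1 : (0 : ℝ) < a * Tv a + 1 := by positivity
  rw [hgeom, div_pow, pow_succ]
  field_simp

/-- With `t₀ = ⋯ = t_{a-1} = 0` (so `T_j = 1` for `j < a`) and the stationarity
recursion, `T_{a+i} = (1/a)·(a T_a)^(i+1)/(a T_a + 1)^i` for `a + i ≤ n - a`. -/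
theorem stmt_15 (n a : ℕ) (ha : 1 ≤ a) (han : 2 * a ≤ n)
    (Tv : ℕ → ℝ) (hpos : ∀ i ≤ n, 0 < Tv i)
    (hzero : ∀ j < a, Tv j = 1)
    (hrec : ∀ i, a < i → i ≤ n - a →
      Tv i = (-1 + Real.sqrt (1 + 4 * (∑ j ∈ Finset.range (i - 1), 1 / Tv j) *
        (∑ j ∈ Finset.range i, 1 / Tv j) * Tv (i - 1) ^ 2)) /
        (2 * ∑ j ∈ Finset.range i, 1 / Tv j)) :
    ∀ i, a + i ≤ n - a →
      Tv (a + i) = (1 / (a : ℝ)) * (((a : ℝ) * Tv a) ^ (i + 1) /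
        ((a : ℝ) * Tv a + 1) ^ i) :=
  stmt_15_general n a ha Tv hpos hzero hrec
end
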